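/- The vector field X₂ = (2x³ + 2xy)∂ₓ + (x²y + y²)∂_y is tangent to the curve S = {x(x+y²)y(y+x²) = 0}: with f = x(x+y²)y(y+x²), there exists a polynomial h such that X₂·f = h·f. -/
import Mathlib

open MvPolynomial

noncomputable def x : MvPolynomial (Fin 2) ℚ := X 0
noncomputable def y : MvPolynomial (Fin 2) ℚ := X 1

noncomputable def fS : MvPolynomial (Fin 2) ℚ := x * (x + y ^ 2) * y * (y + x ^ 2)

theorem stmt12 :
    ∃ h : MvPolynomial (Fin 2) ℚ,
      (2 * x ^ 3 + 2 * x * y) * pderiv 0 fS + (x ^ 2 * y + y ^ 2) * pderiv 1 fS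
        = h * fS := by
  use 9 * x ^ 2 + 6 * y
  simp only [fS, x, y, pderiv_mul, map_add, pderiv_pow, pderiv_X,
    Pi.single_eq_same, Pi.single_eq_of_ne (show (0:Fin 2) ≠ 1 by decide),
    Pi.single_eq_of_ne (show (1:Fin 2) ≠ 0 by decide)]
  ring
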